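/- For every integer k ≥ 0, Ulam[2^{k+1}−1] is exactly the set of pairs (x,z) ∈ ℕ×ℕ such that x+z ≡ −1 (mod 2^{k+1}) and x+z ≠ 2^{k+1}−1. -/

import Mathlib

/-- Fuel-indexed Ulam predicate: a binary word (as a `List Bool`) of length 1 is Ulam,
and a longer word is Ulam iff it is expressible *uniquely* as a concatenation of two
distinct (nonempty) Ulam words. The fuel strictly exceeds the lengths needed. -/
def ulamAux : ℕ → List Bool → Prop
  | 0, _ => False
  | n + 1, w =>
    if w.length = 1 then True
    else ∃! p : List Bool × List Bool,
      p.1 ≠ [] ∧ p.2 ≠ [] ∧ p.1 ≠ p.2 ∧ w = p.1 ++ p.2 ∧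
        ulamAux n p.1 ∧ ulamAux n p.2

/-- A binary word is an Ulam word. -/
def IsUlam (w : List Bool) : Prop := ulamAux w.length w

/-- The word `0^x 1 0^y`. -/
def wordTwo (x y : ℕ) : List Bool :=
  List.replicate x false ++ [true] ++ List.replicate y false

/-- The word `0^x 1 0^y 1 0^z`. -/
def wordThree (x y z : ℕ) : List Bool :=
  List.replicate x false ++ [true] ++ List.replicate y false ++ [true] ++
    List.replicate z false

/-- `UlamSet y` is the set of pairs `(x,z)` such that `0^x 1 0^y 1 0^z` is Ulam. -/
def UlamSet (y : ℕ) : Set (ℕ × ℕ) := {p | IsUlam (wordThree p.1 y p.2)}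

/-- `culam y x z = min(2, N)` where `N` counts `0 ≤ a ≤ y` with both
`w(x,a)` and `w(y-a,z)` Ulam. -/
noncomputable def culam (y x z : ℕ) : ℕ :=
  min 2 {a : ℕ | a ≤ y ∧ IsUlam (wordTwo x a) ∧ IsUlam (wordTwo (y - a) z)}.ncard

/-- A positive integer is Zumkeller if its binary representation has at most one `0`. -/
def IsZumkeller (y : ℕ) : Prop := 0 < y ∧ (Nat.bits y).count false ≤ 1

/-- The largest `e ≤ d - 1` with `x mod 2^(e+1) < 2^e` and `z mod 2^(e+1) < 2^e`
(and `0` if none exists). -/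
def eIdx (d x z : ℕ) : ℕ :=
  Nat.findGreatest (fun e => x % 2 ^ (e + 1) < 2 ^ e ∧ z % 2 ^ (e + 1) < 2 ^ e) (d - 1)

/-- The universal pattern `E1[d]` on `B_d`. -/
def E1 (d x z : ℕ) : ℕ :=
  if 2 ^ d - 1 ≤ x + z then 0
  else if x % 2 ^ eIdx d x z + z % 2 ^ eIdx d x z < 2 ^ eIdx d x z - 1 then 2 else 1

/-- The universal pattern `E2[d]` on `B_d` (constant `1`). -/
def E2 (_d _x _z : ℕ) : ℕ := 1

/-- The universal pattern `O1[d]` on `B_d`. -/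
def O1 (d x z : ℕ) : ℕ :=
  if 2 ^ d - 2 ≤ x + z then 0
  else if (x + z) % 2 = 0 then (if x % 2 = 1 then 0 else 2)
  else if x % 2 ^ eIdx d x z + z % 2 ^ eIdx d x z < 2 ^ eIdx d x z - 1 then 2 else 1

/-- The universal pattern `O2[d]` on `B_d` (independent of `d`). -/
def O2 (_d x z : ℕ) : ℕ :=
  if (x + z) % 2 = 0 then (if x % 2 = 1 then 0 else 2) else 1
/-! ### Auxiliary development -/

section UlamDev

/-- Unfolding equation for `ulamAux` at a successor fuel. -/
lemma ulamAux_succ_eq (n : ℕ) (w : List Bool) :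
    ulamAux (n+1) w = if w.length = 1 then True
    else ∃! p : List Bool × List Bool,
      p.1 ≠ [] ∧ p.2 ≠ [] ∧ p.1 ≠ p.2 ∧ w = p.1 ++ p.2 ∧
        ulamAux n p.1 ∧ ulamAux n p.2 := rfl

lemma not_ulamAux_nil (n : ℕ) : ¬ ulamAux n [] := by
  cases n with
  | zero => simp [ulamAux]
  | succ n =>
    rw [ulamAux_succ_eq]
    simp only [List.length_nil, if_neg (by norm_num : (0:ℕ) ≠ 1)]
    rintro ⟨p, ⟨h1, h2, h3, h4, h5⟩, hu⟩
    exact h1 (List.append_eq_nil_iff.mp h4.symm).1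

lemma ulamAux_step : ∀ n (w : List Bool), w.length ≤ n →
    (ulamAux (n+1) w ↔ ulamAux n w) := by
  intro n
  induction n with
  | zero =>
    intro w hw
    have hnil : w = [] := List.eq_nil_of_length_eq_zero (Nat.le_zero.mp hw)
    subst hnil
    simp [not_ulamAux_nil 1, not_ulamAux_nil 0]
  | succ n ih =>
    intro w hw
    rw [ulamAux_succ_eq, ulamAux_succ_eq]
    by_cases hl : w.length = 1
    · simp [hl]
    · simp only [if_neg hl]
      apply existsUnique_congr
      intro p
      constructor
      · rintro ⟨h1, h2, h3, h4, h5, h6⟩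
        have hlen : p.1.length + p.2.length = w.length := by
          rw [h4]; simp
        have hp1 : p.1.length ≤ n := by
          have : p.2.length ≠ 0 := fun h => h2 (List.eq_nil_of_length_eq_zero h)
          omega
        have hp2 : p.2.length ≤ n := by
          have : p.1.length ≠ 0 := fun h => h1 (List.eq_nil_of_length_eq_zero h)
          omega
        exact ⟨h1, h2, h3, h4, (ih p.1 hp1).mp h5, (ih p.2 hp2).mp h6⟩
      · rintro ⟨h1, h2, h3, h4, h5, h6⟩
        have hlen : p.1.length + p.2.length = w.length := by
          rw [h4]; simp
        have hp1 : p.1.length ≤ n := by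
          have : p.2.length ≠ 0 := fun h => h2 (List.eq_nil_of_length_eq_zero h)
          omega
        have hp2 : p.2.length ≤ n := by
          have : p.1.length ≠ 0 := fun h => h1 (List.eq_nil_of_length_eq_zero h)
          omega
        exact ⟨h1, h2, h3, h4, (ih p.1 hp1).mpr h5, (ih p.2 hp2).mpr h6⟩

lemma ulamAux_add (k n : ℕ) (w : List Bool) (hw : w.length ≤ n) :
    ulamAux (n + k) w ↔ ulamAux n w := by
  induction k with
  | zero => rfl
  | succ k ih =>
    have hstep := ulamAux_step (n + k) w (le_trans hw (Nat.le_add_right _ _))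
    rw [show n + (k+1) = (n + k) + 1 by omega, hstep, ih]

lemma ulamAux_iff_isUlam {n : ℕ} {w : List Bool} (hw : w.length ≤ n) :
    ulamAux n w ↔ IsUlam w := by
  have h : n = w.length + (n - w.length) := by omega
  rw [IsUlam, h, ulamAux_add _ _ _ (le_refl _)]

lemma isUlam_of_length_one {w : List Bool} (h : w.length = 1) : IsUlam w := by
  rw [IsUlam, h, ulamAux_succ_eq, if_pos h]
  trivial

lemma isUlam_iff_two {w : List Bool} (h : 2 ≤ w.length) :
    IsUlam w ↔ ∃! p : List Bool × List Bool,
      p.1 ≠ [] ∧ p.2 ≠ [] ∧ p.1 ≠ p.2 ∧ w = p.1 ++ p.2 ∧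
        IsUlam p.1 ∧ IsUlam p.2 := by
  have hl : w.length = (w.length - 1) + 1 := by omega
  rw [IsUlam, hl, ulamAux_succ_eq, if_neg (by omega)]
  apply existsUnique_congr
  intro p
  constructor
  · rintro ⟨h1, h2, h3, h4, h5, h6⟩
    have hlen : p.1.length + p.2.length = w.length := by rw [h4]; simp
    have e1 : p.1.length ≠ 0 := fun hh => h1 (List.eq_nil_of_length_eq_zero hh)
    have e2 : p.2.length ≠ 0 := fun hh => h2 (List.eq_nil_of_length_eq_zero hh)
    exact ⟨h1, h2, h3, h4, (ulamAux_iff_isUlam (by omega)).mp h5,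
      (ulamAux_iff_isUlam (by omega)).mp h6⟩
  · rintro ⟨h1, h2, h3, h4, h5, h6⟩
    have hlen : p.1.length + p.2.length = w.length := by rw [h4]; simp
    have e1 : p.1.length ≠ 0 := fun hh => h1 (List.eq_nil_of_length_eq_zero hh)
    have e2 : p.2.length ≠ 0 := fun hh => h2 (List.eq_nil_of_length_eq_zero hh)
    exact ⟨h1, h2, h3, h4, (ulamAux_iff_isUlam (by omega)).mpr h5,
      (ulamAux_iff_isUlam (by omega)).mpr h6⟩

/-! ### Basic word lemmas -/

lemma wordTwo_zero (y : ℕ) : wordTwo 0 y = true :: List.replicate y false := rfl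

lemma wordTwo_succ (x y : ℕ) : wordTwo (x+1) y = false :: wordTwo x y := by
  simp [wordTwo, List.replicate_succ]

lemma wordThree_zero (y z : ℕ) : wordThree 0 y z = true :: wordTwo y z := rfl

lemma wordThree_succ (x y z : ℕ) : wordThree (x+1) y z = false :: wordThree x y z := by
  simp [wordThree, List.replicate_succ]

lemma wordTwo_length (x y : ℕ) : (wordTwo x y).length = x + y + 1 := by
  simp [wordTwo]; omega

lemma wordThree_length (x y z : ℕ) : (wordThree x y z).length = x + y + z + 2 := by
  simp [wordThree]; omega

lemma true_mem_wordTwo (x y : ℕ) : true ∈ wordTwo x y := by simp [wordTwo]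

lemma true_mem_wordThree (x y z : ℕ) : true ∈ wordThree x y z := by simp [wordThree]

lemma wordTwo_ne_nil (x y : ℕ) : wordTwo x y ≠ [] :=
  List.ne_nil_of_mem (true_mem_wordTwo x y)

lemma wordThree_ne_nil (x y z : ℕ) : wordThree x y z ≠ [] :=
  List.ne_nil_of_mem (true_mem_wordThree x y z)

lemma wordTwo_ne_replicate (x y c : ℕ) : wordTwo x y ≠ List.replicate c false := by
  intro h
  have hm := true_mem_wordTwo x y
  rw [h] at hm
  simpa using List.eq_of_mem_replicate hm

lemma count_wordThree (x y z : ℕ) : (wordThree x y z).count true = 2 := by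
  simp [wordThree, List.count_replicate]

lemma false_ne_wordThree (x y z : ℕ) : ([false] : List Bool) ≠ wordThree x y z := by
  intro h
  have hc := congrArg (fun l => List.count true l) h
  simp [count_wordThree, List.count_replicate] at hc

lemma false_ne_wordTwo (x y : ℕ) : ([false] : List Bool) ≠ wordTwo x y := by
  intro h
  exact wordTwo_ne_replicate x y 1 h.symm

lemma wordTwo_inj : ∀ {x : ℕ} {y x' y' : ℕ}, wordTwo x y = wordTwo x' y' → x = x' ∧ y = y' := by
  intro x
  induction x with
  | zero =>
    intro y x' y' h
    cases x' with
    | zero =>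
      rw [wordTwo_zero, wordTwo_zero] at h
      have h2 := (List.cons.injEq _ _ _ _).mp h
      have hy := congrArg List.length h2.2
      simp at hy
      exact ⟨rfl, hy⟩
    | succ x' =>
      rw [wordTwo_zero, wordTwo_succ] at h
      exact absurd ((List.cons.injEq _ _ _ _).mp h).1 (by simp)
  | succ x ih =>
    intro y x' y' h
    cases x' with
    | zero =>
      rw [wordTwo_succ, wordTwo_zero] at h
      exact absurd ((List.cons.injEq _ _ _ _).mp h).1 (by simp)
    | succ x' =>
      rw [wordTwo_succ, wordTwo_succ] at h
      have h2 := ih ((List.cons.injEq _ _ _ _).mp h).2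
      exact ⟨by omega, h2.2⟩

lemma replicate_split {c : ℕ} {u v : List Bool}
    (h : List.replicate c false = u ++ v) :
    u = List.replicate u.length false ∧ v = List.replicate v.length false ∧
      u.length + v.length = c := by
  have hu : ∀ b ∈ u, b = false := fun b hb =>
    List.eq_of_mem_replicate (h ▸ List.mem_append_left v hb)
  have hv : ∀ b ∈ v, b = false := fun b hb =>
    List.eq_of_mem_replicate (h ▸ List.mem_append_right u hb)
  refine ⟨List.eq_replicate_of_mem hu, List.eq_replicate_of_mem hv, ?_⟩
  have hc := congrArg List.length h
  simp at hc
  omega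

lemma wordTwo_split : ∀ (x : ℕ) {y : ℕ} {u v : List Bool}, u ≠ [] → v ≠ [] →
    wordTwo x y = u ++ v →
    (∃ j, 1 ≤ j ∧ j ≤ x ∧ u = List.replicate j false ∧ v = wordTwo (x - j) y) ∨
    (∃ j, 1 ≤ j ∧ j ≤ y ∧ u = wordTwo x (y - j) ∧ v = List.replicate j false) := by
  intro x
  induction x with
  | zero =>
    intro y u v hu hv h
    rw [wordTwo_zero] at h
    cases u with
    | nil => exact absurd rfl hu
    | cons b u' =>
      rw [List.cons_append] at h
      have hb := ((List.cons.injEq _ _ _ _).mp h).1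
      have h2 := ((List.cons.injEq _ _ _ _).mp h).2
      obtain ⟨hu', hv', hlen⟩ := replicate_split h2
      have hv1 : 1 ≤ v.length := by
        cases v with
        | nil => exact absurd rfl hv
        | cons _ _ => simp
      right
      refine ⟨v.length, hv1, by omega, ?_, hv'⟩
      rw [wordTwo_zero, ← hb, hu']
      have he : u'.length = y - v.length := by omega
      rw [he]
  | succ x ih =>
    intro y u v hu hv h
    rw [wordTwo_succ] at h
    cases u with
    | nil => exact absurd rfl hu
    | cons b u' =>
      rw [List.cons_append] at h
      have hb := ((List.cons.injEq _ _ _ _).mp h).1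
      have h2 := ((List.cons.injEq _ _ _ _).mp h).2
      by_cases hu' : u' = ([] : List Bool)
      · subst hu'
        left
        refine ⟨1, le_refl _, by omega, by rw [← hb]; rfl, ?_⟩
        simp only [List.nil_append] at h2
        rw [← h2]
        congr 1
      · rcases ih hu' hv h2 with ⟨j, hj1, hjx, hju, hjv⟩ | ⟨j, hj1, hjy, hju, hjv⟩
        · left
          refine ⟨j + 1, by omega, by omega, ?_, ?_⟩
          · rw [← hb, hju, List.replicate_succ]
          · rw [hjv]; congr 1; omega
        · right
          refine ⟨j, hj1, hjy, ?_, hjv⟩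
          rw [← hb, hju, wordTwo_succ]

lemma wordThree_split : ∀ (x : ℕ) {y z : ℕ} {u v : List Bool}, u ≠ [] → v ≠ [] →
    wordThree x y z = u ++ v →
    (∃ j, 1 ≤ j ∧ j ≤ x ∧ u = List.replicate j false ∧ v = wordThree (x - j) y z) ∨
    (∃ a, a ≤ y ∧ u = wordTwo x a ∧ v = wordTwo (y - a) z) ∨
    (∃ j, 1 ≤ j ∧ j ≤ z ∧ u = wordThree x y (z - j) ∧ v = List.replicate j false) := by
  intro x
  induction x with
  | zero =>
    intro y z u v hu hv h
    rw [wordThree_zero] at h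
    cases u with
    | nil => exact absurd rfl hu
    | cons b u' =>
      rw [List.cons_append] at h
      have hb := ((List.cons.injEq _ _ _ _).mp h).1
      have h2 := ((List.cons.injEq _ _ _ _).mp h).2
      by_cases hu' : u' = ([] : List Bool)
      · subst hu'
        right; left
        refine ⟨0, Nat.zero_le _, by rw [← hb]; rfl, ?_⟩
        simp only [List.nil_append] at h2
        rw [← h2, Nat.sub_zero]
      · rcases wordTwo_split y hu' hv h2 with ⟨j, hj1, hjy, hju, hjv⟩ | ⟨j, hj1, hjz, hju, hjv⟩
        · right; left
          refine ⟨j, hjy, ?_, hjv⟩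
          rw [← hb, hju]
          rfl
        · right; right
          refine ⟨j, hj1, hjz, ?_, hjv⟩
          rw [← hb, hju, wordThree_zero]
  | succ x ih =>
    intro y z u v hu hv h
    rw [wordThree_succ] at h
    cases u with
    | nil => exact absurd rfl hu
    | cons b u' =>
      rw [List.cons_append] at h
      have hb := ((List.cons.injEq _ _ _ _).mp h).1
      have h2 := ((List.cons.injEq _ _ _ _).mp h).2
      by_cases hu' : u' = ([] : List Bool)
      · subst hu'
        left
        refine ⟨1, le_refl _, by omega, by rw [← hb]; rfl, ?_⟩
        simp only [List.nil_append] at h2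
        rw [← h2]
        congr 1
      · rcases ih hu' hv h2 with ⟨j, hj1, hjx, hju, hjv⟩ |
          ⟨a, hay, hju, hjv⟩ | ⟨j, hj1, hjz, hju, hjv⟩
        · left
          refine ⟨j + 1, by omega, by omega, ?_, ?_⟩
          · rw [← hb, hju, List.replicate_succ]
          · rw [hjv]; congr 1; omega
        · right; left
          refine ⟨a, hay, ?_, hjv⟩
          rw [← hb, hju, wordTwo_succ]
        · right; right
          refine ⟨j, hj1, hjz, ?_, hjv⟩
          rw [← hb, hju, wordThree_succ]

lemma wordThree_eq_middle (x z : ℕ) {a y : ℕ} (h : a ≤ y) :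
    wordThree x y z = wordTwo x a ++ wordTwo (y - a) z := by
  have h2 : List.replicate y (false : Bool)
      = List.replicate a false ++ List.replicate (y - a) false := by
    rw [← List.replicate_add]
    congr 1
    omega
  rw [wordThree, wordTwo, wordTwo, h2]
  simp only [List.append_assoc]

lemma wordThree_eq_left {x : ℕ} (y z : ℕ) (h : 1 ≤ x) :
    wordThree x y z = [false] ++ wordThree (x - 1) y z := by
  obtain ⟨x', rfl⟩ : ∃ x', x = x' + 1 := ⟨x - 1, by omega⟩
  rw [wordThree_succ]
  simp

lemma wordThree_eq_right (x y : ℕ) {z : ℕ} (h : 1 ≤ z) :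
    wordThree x y z = wordThree x y (z - 1) ++ [false] := by
  obtain ⟨z', rfl⟩ : ∃ z', z = z' + 1 := ⟨z - 1, by omega⟩
  rw [wordThree, wordThree]
  simp only [Nat.add_sub_cancel, List.replicate_succ']
  simp [List.append_assoc]

lemma wordTwo_eq_left {x : ℕ} (y : ℕ) (h : 1 ≤ x) :
    wordTwo x y = [false] ++ wordTwo (x - 1) y := by
  obtain ⟨x', rfl⟩ : ∃ x', x = x' + 1 := ⟨x - 1, by omega⟩
  rw [wordTwo_succ]
  simp

lemma wordTwo_eq_right (x : ℕ) {y : ℕ} (h : 1 ≤ y) :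
    wordTwo x y = wordTwo x (y - 1) ++ [false] := by
  obtain ⟨y', rfl⟩ : ∃ y', y = y' + 1 := ⟨y - 1, by omega⟩
  rw [wordTwo, wordTwo]
  simp only [Nat.add_sub_cancel, List.replicate_succ']
  simp [List.append_assoc]

/-! ### Ulam replicate words -/

lemma isUlam_replicate : ∀ c, IsUlam (List.replicate c false) → c = 1 := by
  intro c
  induction c using Nat.strong_induction_on with
  | _ c ih =>
    intro h
    match c, h with
    | 0, h => exact absurd h (not_ulamAux_nil 0)
    | 1, h => rfl
    | (c+2), h =>
      rw [isUlam_iff_two (by simp)] at h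
      obtain ⟨p, ⟨h1, h2, h3, h4, h5, h6⟩, -⟩ := h
      obtain ⟨hu, hv, hlen⟩ := replicate_split h4
      have e1 : p.1.length ≠ 0 := fun hh => h1 (List.eq_nil_of_length_eq_zero hh)
      have e2 : p.2.length ≠ 0 := fun hh => h2 (List.eq_nil_of_length_eq_zero hh)
      have l1 : p.1.length = 1 := ih p.1.length (by omega) (by rw [← hu]; exact h5)
      have l2 : p.2.length = 1 := ih p.2.length (by omega) (by rw [← hv]; exact h6)
      exact absurd (by rw [hu, hv, l1, l2] : p.1 = p.2) h3

lemma isUlam_false : IsUlam [false] := isUlam_of_length_one rfl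

/-! ### Digit-disjointness -/

def Disj (x y : ℕ) : Prop := ∀ i, ¬(x.testBit i = true ∧ y.testBit i = true)

lemma disj_zero_right (x : ℕ) : Disj x 0 := fun i h => by
  simp [Nat.zero_testBit] at h

lemma disj_zero_left (y : ℕ) : Disj 0 y := fun i h => by
  simp [Nat.zero_testBit] at h

lemma disj_iff (x y : ℕ) :
    Disj x y ↔ (¬(x % 2 = 1 ∧ y % 2 = 1)) ∧ Disj (x / 2) (y / 2) := by
  constructor
  · intro h
    refine ⟨fun hc => h 0 ?_, fun i hc => h (i+1) ?_⟩
    · rw [Nat.testBit_zero, Nat.testBit_zero]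
      simp [hc.1, hc.2]
    · rw [Nat.testBit_add_one, Nat.testBit_add_one]
      exact hc
  · rintro ⟨h0, h⟩ i ⟨ha, hb⟩
    cases i with
    | zero =>
      rw [Nat.testBit_zero] at ha hb
      exact h0 ⟨by simpa using ha, by simpa using hb⟩
    | succ i =>
      rw [Nat.testBit_add_one] at ha hb
      exact h i ⟨ha, hb⟩

lemma exactlyOne_disj : ∀ n x y : ℕ, x + y = n → 1 ≤ n →
    ((((1 ≤ x ∧ Disj (x-1) y) ∧ ¬(1 ≤ y ∧ Disj x (y-1))) ∨
      ((1 ≤ y ∧ Disj x (y-1)) ∧ ¬(1 ≤ x ∧ Disj (x-1) y))) ↔ Disj x y) := by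
  intro n
  induction n using Nat.strong_induction_on with
  | _ n ihn =>
    intro x y hxy hn
    rcases Nat.mod_two_eq_zero_or_one x with hx | hx <;>
      rcases Nat.mod_two_eq_zero_or_one y with hy | hy
    · -- both even
      by_cases hx0 : x = 0
      · subst hx0
        have hy2 : 2 ≤ y := by omega
        have hR : Disj 0 y := disj_zero_left y
        have hP2 : Disj 0 (y-1) := disj_zero_left _
        simp only [hR, iff_true]
        right
        exact ⟨⟨by omega, hP2⟩, fun hc => by omega⟩
      · by_cases hy0 : y = 0
        · subst hy0
          have hx2 : 2 ≤ x := by omega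
          have hR : Disj x 0 := disj_zero_right x
          have hP1 : Disj (x-1) 0 := disj_zero_right _
          simp only [hR, iff_true]
          left
          exact ⟨⟨by omega, hP1⟩, fun hc => by omega⟩
        · have hx2 : 2 ≤ x := by omega
          have hy2 : 2 ≤ y := by omega
          have hP1 : Disj (x-1) y ↔ Disj (x/2 - 1) (y/2) := by
            rw [disj_iff]
            have e1 : (x-1) % 2 = 1 := by omega
            have e2 : (x-1)/2 = x/2 - 1 := by omega
            rw [e1, e2]
            simp [hy]
          have hP2 : Disj x (y-1) ↔ Disj (x/2) (y/2 - 1) := by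
            rw [disj_iff]
            have e1 : (y-1) % 2 = 1 := by omega
            have e2 : (y-1)/2 = y/2 - 1 := by omega
            rw [e1, e2]
            simp [hx]
          have hR : Disj x y ↔ Disj (x/2) (y/2) := by
            rw [disj_iff]
            simp [hx]
          have hIH := ihn (x/2 + y/2) (by omega) (x/2) (y/2) rfl (by omega)
          have h12 : 1 ≤ x/2 := by omega
          have h22 : 1 ≤ y/2 := by omega
          rw [hP1, hP2, hR, ← hIH]
          constructor
          · rintro (⟨hA, hB⟩ | ⟨hB, hA⟩)
            · exact Or.inl ⟨⟨h12, hA.2⟩, fun hc => hB ⟨by omega, hc.2⟩⟩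
            · exact Or.inr ⟨⟨h22, hB.2⟩, fun hc => hA ⟨by omega, hc.2⟩⟩
          · rintro (⟨hA, hB⟩ | ⟨hB, hA⟩)
            · exact Or.inl ⟨⟨by omega, hA.2⟩, fun hc => hB ⟨h22, hc.2⟩⟩
            · exact Or.inr ⟨⟨by omega, hB.2⟩, fun hc => hA ⟨h12, hc.2⟩⟩
    · -- x even, y odd
      have hy1 : 1 ≤ y := by omega
      have hP2 : Disj x (y-1) ↔ Disj x y := by
        rw [disj_iff, disj_iff x y]
        have e1 : (y-1) % 2 = 0 := by omega
        have e2 : (y-1)/2 = y/2 := by omega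
        rw [e1, e2]
        simp [hx]
      by_cases hx0 : x = 0
      · subst hx0
        have hR : Disj 0 y := disj_zero_left y
        simp only [hR, iff_true]
        right
        exact ⟨⟨hy1, hP2.mpr hR⟩, fun hc => by omega⟩
      · have hx2 : 2 ≤ x := by omega
        have hP1 : ¬ Disj (x-1) y := by
          intro hc
          rw [disj_iff] at hc
          exact hc.1 ⟨by omega, hy⟩
        constructor
        · rintro (⟨hA, hB⟩ | ⟨hB, hA⟩)
          · exact absurd hA.2 hP1
          · exact hP2.mp hB.2
        · intro hR
          exact Or.inr ⟨⟨hy1, hP2.mpr hR⟩, fun hc => hP1 hc.2⟩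
    · -- x odd, y even
      have hx1 : 1 ≤ x := by omega
      have hP1 : Disj (x-1) y ↔ Disj x y := by
        rw [disj_iff, disj_iff x y]
        have e1 : (x-1) % 2 = 0 := by omega
        have e2 : (x-1)/2 = x/2 := by omega
        rw [e1, e2]
        simp [hy]
      by_cases hy0 : y = 0
      · subst hy0
        have hR : Disj x 0 := disj_zero_right x
        simp only [hR, iff_true]
        left
        exact ⟨⟨hx1, hP1.mpr hR⟩, fun hc => by omega⟩
      · have hy2 : 2 ≤ y := by omega
        have hP2 : ¬ Disj x (y-1) := by
          intro hc
          rw [disj_iff] at hc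
          exact hc.1 ⟨hx, by omega⟩
        constructor
        · rintro (⟨hA, hB⟩ | ⟨hB, hA⟩)
          · exact hP1.mp hA.2
          · exact absurd hB.2 hP2
        · intro hR
          exact Or.inl ⟨⟨hx1, hP1.mpr hR⟩, fun hc => hP2 hc.2⟩
    · -- both odd
      have hx1 : 1 ≤ x := by omega
      have hy1 : 1 ≤ y := by omega
      have hR : ¬ Disj x y := by
        intro hc
        rw [disj_iff] at hc
        exact hc.1 ⟨hx, hy⟩
      have hP1 : Disj (x-1) y ↔ Disj (x/2) (y/2) := by
        rw [disj_iff]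
        have e1 : (x-1) % 2 = 0 := by omega
        have e2 : (x-1)/2 = x/2 := by omega
        rw [e1, e2]
        simp
      have hP2 : Disj x (y-1) ↔ Disj (x/2) (y/2) := by
        rw [disj_iff]
        have e1 : (y-1) % 2 = 0 := by omega
        have e2 : (y-1)/2 = y/2 := by omega
        rw [e1, e2]
        simp
      simp only [hR, iff_false]
      rintro (⟨hA, hB⟩ | ⟨hB, hA⟩)
      · exact hB ⟨hy1, hP2.mpr (hP1.mp hA.2)⟩
      · exact hA ⟨hx1, hP1.mpr (hP2.mp hB.2)⟩

/-! ### Helpers for unique pairs -/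

lemma not_existsUnique_of_two {α : Sort*} {Q : α → Prop} {a b : α}
    (ha : Q a) (hb : Q b) (hab : a ≠ b) : ¬ ∃! x, Q x := by
  rintro ⟨c, -, hc⟩
  exact hab ((hc a ha).trans (hc b hb).symm)

lemma not_existsUnique_of_none {α : Sort*} {Q : α → Prop}
    (h : ∀ x, ¬ Q x) : ¬ ∃! x, Q x := by
  rintro ⟨c, hc, -⟩
  exact h c hc

lemma existsUnique_two_choices {α : Type*} {p₁ p₂ : α} (h : p₁ ≠ p₂) (A B : Prop) :
    (∃! p, (A ∧ p = p₁) ∨ (B ∧ p = p₂)) ↔ ((A ∧ ¬B) ∨ (B ∧ ¬A)) := by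
  constructor
  · rintro ⟨p, hp | hp, hu⟩
    · rcases hp with ⟨hA, rfl⟩
      left
      refine ⟨hA, fun hB => ?_⟩
      have he := hu p₂ (Or.inr ⟨hB, rfl⟩)
      exact h he.symm
    · rcases hp with ⟨hB, rfl⟩
      right
      refine ⟨hB, fun hA => ?_⟩
      have he := hu p₁ (Or.inl ⟨hA, rfl⟩)
      exact h he
  · rintro (⟨hA, hB⟩ | ⟨hB, hA⟩)
    · refine ⟨p₁, Or.inl ⟨hA, rfl⟩, ?_⟩
      rintro q (⟨-, rfl⟩ | ⟨hb, rfl⟩)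
      · rfl
      · exact absurd hb hB
    · refine ⟨p₂, Or.inr ⟨hB, rfl⟩, ?_⟩
      rintro q (⟨ha, rfl⟩ | ⟨-, rfl⟩)
      · exact absurd ha hA
      · rfl

/-! ### Characterization of words with one `1` -/

lemma isUlam_wordTwo : ∀ n x y : ℕ, x + y = n → (IsUlam (wordTwo x y) ↔ Disj x y) := by
  intro n
  induction n using Nat.strong_induction_on with
  | _ n ihn =>
    intro x y hxy
    by_cases hn : n = 0
    · subst hn
      have hx : x = 0 := by omega
      have hy : y = 0 := by omega
      subst hx; subst hy
      have hU : IsUlam (wordTwo 0 0) := isUlam_of_length_one (by rw [wordTwo_length])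
      simp [hU, disj_zero_left]
    · have hn1 : 1 ≤ n := by omega
      rw [isUlam_iff_two (by rw [wordTwo_length]; omega)]
      have hQ : ∀ p : List Bool × List Bool,
          (p.1 ≠ [] ∧ p.2 ≠ [] ∧ p.1 ≠ p.2 ∧ wordTwo x y = p.1 ++ p.2 ∧
            IsUlam p.1 ∧ IsUlam p.2) ↔
          (((1 ≤ x ∧ Disj (x-1) y) ∧ p = (([false] : List Bool), wordTwo (x-1) y)) ∨
           ((1 ≤ y ∧ Disj x (y-1)) ∧ p = (wordTwo x (y-1), ([false] : List Bool)))) := by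
        intro p
        constructor
        · rintro ⟨h1, h2, h3, h4, h5, h6⟩
          rcases wordTwo_split x h1 h2 h4 with ⟨j, hj1, hjx, hju, hjv⟩ | ⟨j, hj1, hjy, hju, hjv⟩
          · have hj : j = 1 := isUlam_replicate j (by rw [← hju]; exact h5)
            subst hj
            left
            have hD : Disj (x-1) y := by
              rw [← ihn (x - 1 + y) (by omega) (x-1) y rfl, ← hjv]
              exact h6
            refine ⟨⟨hjx, hD⟩, ?_⟩
            rw [Prod.ext_iff]
            exact ⟨by rw [hju]; rfl, hjv⟩
          · have hj : j = 1 := isUlam_replicate j (by rw [← hjv]; exact h6)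
            subst hj
            right
            have hD : Disj x (y-1) := by
              rw [← ihn (x + (y - 1)) (by omega) x (y-1) rfl, ← hju]
              exact h5
            refine ⟨⟨hjy, hD⟩, ?_⟩
            rw [Prod.ext_iff]
            exact ⟨hju, by rw [hjv]; rfl⟩
        · rintro (⟨⟨hx1, hD⟩, rfl⟩ | ⟨⟨hy1, hD⟩, rfl⟩)
          · refine ⟨by simp, wordTwo_ne_nil _ _, false_ne_wordTwo _ _,
              wordTwo_eq_left y hx1, isUlam_false, ?_⟩
            rw [ihn (x - 1 + y) (by omega) (x-1) y rfl]
            exact hD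
          · refine ⟨wordTwo_ne_nil _ _, by simp,
              fun hh => false_ne_wordTwo _ _ hh.symm,
              wordTwo_eq_right x hy1, ?_, isUlam_false⟩
            rw [ihn (x + (y-1)) (by omega) x (y-1) rfl]
            exact hD
      rw [existsUnique_congr hQ,
        existsUnique_two_choices
          (fun hh => false_ne_wordTwo x (y-1) (congrArg Prod.fst hh))]
      exact exactlyOne_disj n x y hxy hn1

/-! ### Bit lemmas -/

lemma testBit_high {n a i : ℕ} (ha : a < 2^n) (hi : n ≤ i) : a.testBit i = false :=
  Nat.testBit_lt_two_pow (lt_of_lt_of_le ha (Nat.pow_le_pow_right (by norm_num) hi))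

lemma mod_lt_two_pow (x n : ℕ) : x % 2^n < 2^n := Nat.mod_lt x (Nat.two_pow_pos n)

lemma testBit_compl : ∀ (n a : ℕ), a < 2^n → ∀ i,
    (2^n - 1 - a).testBit i = (decide (i < n) && !a.testBit i) := by
  intro n
  induction n with
  | zero =>
    intro a ha i
    have h0 : a = 0 := by simp at ha; omega
    subst h0
    norm_num [Nat.zero_testBit]
  | succ n ih =>
    intro a ha i
    have hp : (2:ℕ)^(n+1) = 2 * 2^n := by rw [pow_succ]; ring
    have h1 : (1:ℕ) ≤ 2^n := Nat.one_le_two_pow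
    have hd := Nat.div_add_mod a 2
    have ha2 : a / 2 < 2^n := by omega
    have hkey : 2^(n+1) - 1 - a = 2 * (2^n - 1 - a/2) + (1 - a % 2) := by omega
    rw [hkey]
    cases i with
    | zero =>
      rw [Nat.testBit_zero, Nat.testBit_zero]
      rcases Nat.mod_two_eq_zero_or_one a with h | h
      · rw [h]
        norm_num [Nat.mul_add_mod]
      · rw [h]
        norm_num [Nat.mul_add_mod]
    | succ i =>
      rw [Nat.testBit_add_one, Nat.testBit_add_one]
      have hdiv : (2 * (2^n - 1 - a/2) + (1 - a % 2)) / 2 = 2^n - 1 - a/2 := by omega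
      rw [hdiv, ih (a/2) ha2 i]
      simp [Nat.succ_lt_succ_iff]

lemma testBit_mod_lt {n x i : ℕ} (h : (x % 2^n).testBit i = true) :
    x.testBit i = true ∧ i < n := by
  rw [Nat.testBit_mod_two_pow] at h
  simp only [Bool.and_eq_true, decide_eq_true_eq] at h
  exact ⟨h.2, h.1⟩

lemma testBit_mod_of {n x i : ℕ} (hi : i < n) (h : x.testBit i = true) :
    (x % 2^n).testBit i = true := by
  rw [Nat.testBit_mod_two_pow]
  simp [hi, h]

lemma disj_x_mod {n x z : ℕ} (hD : Disj (x % 2^n) (z % 2^n)) : Disj x (z % 2^n) := by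
  rintro i ⟨hx, hz⟩
  obtain ⟨hz', hi⟩ := testBit_mod_lt hz
  exact hD i ⟨testBit_mod_of hi hx, hz⟩

lemma disj_mod_z {n x z : ℕ} (hD : Disj (x % 2^n) (z % 2^n)) : Disj (x % 2^n) z := by
  rintro i ⟨hx, hz⟩
  obtain ⟨hx', hi⟩ := testBit_mod_lt hx
  exact hD i ⟨hx, testBit_mod_of hi hz⟩

lemma disj_compl_z {n x z : ℕ} (hD : Disj (x % 2^n) (z % 2^n)) :
    Disj (2^n - 1 - z % 2^n) z := by
  rintro i ⟨ha, hz⟩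
  rw [testBit_compl n _ (mod_lt_two_pow z n) i] at ha
  simp only [Bool.and_eq_true, decide_eq_true_eq, Bool.not_eq_true'] at ha
  obtain ⟨hi, hf⟩ := ha
  rw [testBit_mod_of hi hz] at hf
  cases hf

lemma disj_x_compl (n x : ℕ) : Disj x (2^n - 1 - x % 2^n) := by
  rintro i ⟨h1, h2⟩
  rw [testBit_compl n _ (mod_lt_two_pow x n) i] at h2
  simp only [Bool.and_eq_true, decide_eq_true_eq, Bool.not_eq_true'] at h2
  obtain ⟨hin, hf⟩ := h2
  rw [testBit_mod_of hin h1] at hf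
  cases hf

lemma disj_compl_right {n a : ℕ} (ha : a < 2^n) : Disj a (2^n - 1 - a) := by
  rintro i ⟨h1, h2⟩
  rw [testBit_compl n a ha i] at h2
  simp only [Bool.and_eq_true, decide_eq_true_eq, Bool.not_eq_true'] at h2
  obtain ⟨hin, hf⟩ := h2
  rw [h1] at hf
  cases hf

lemma key_unique {n x z a : ℕ} (hsum : x % 2^n + z % 2^n = 2^n - 1)
    (ha : a ≤ 2^n - 1) (h1 : Disj x a) (h2 : Disj (2^n - 1 - a) z) :
    a = z % 2^n := by
  have hpos := Nat.two_pow_pos n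
  have han : a < 2^n := by omega
  have hxm := mod_lt_two_pow x n
  have hzm' := mod_lt_two_pow z n
  have hzm : z % 2^n = 2^n - 1 - x % 2^n := by omega
  apply Nat.eq_of_testBit_eq
  intro i
  by_cases hi : i < n
  · by_cases hz : (z % 2^n).testBit i = true
    · rw [hz]
      by_contra hA
      simp only [Bool.not_eq_true] at hA
      have hcompl : (2^n - 1 - a).testBit i = true := by
        rw [testBit_compl n a han i]
        simp [hi, hA]
      have hzt : z.testBit i = true := (testBit_mod_lt hz).1
      exact h2 i ⟨hcompl, hzt⟩
    · simp only [Bool.not_eq_true] at hz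
      rw [hz]
      have hxmt : (x % 2^n).testBit i = true := by
        rw [hzm, testBit_compl n _ hxm i] at hz
        simpa [hi] using hz
      have hxt : x.testBit i = true := (testBit_mod_lt hxmt).1
      cases h : a.testBit i
      · rfl
      · exact absurd ⟨hxt, h⟩ (h1 i)
  · have h1f := testBit_high han (le_of_not_gt hi)
    have h2f := testBit_high hzm' (le_of_not_gt hi)
    rw [h1f, h2f]

lemma key_kill {n x z a i : ℕ} (hxi : (x % 2^n).testBit i = true)
    (hzi : (z % 2^n).testBit i = true) (ha : a ≤ 2^n - 1) (h1 : Disj x a)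
    (h2 : Disj (2^n - 1 - a) z) : False := by
  have hpos := Nat.two_pow_pos n
  have han : a < 2^n := by omega
  obtain ⟨hxt, hi⟩ := testBit_mod_lt hxi
  obtain ⟨hzt, -⟩ := testBit_mod_lt hzi
  have hA : a.testBit i = false := by
    cases h : a.testBit i
    · rfl
    · exact absurd ⟨hxt, h⟩ (h1 i)
  have hcompl : (2^n - 1 - a).testBit i = true := by
    rw [testBit_compl n a han i]
    simp [hi, hA]
  exact h2 i ⟨hcompl, hzt⟩

/-! ### Arithmetic helpers -/

lemma sum_mod_eq {m a b : ℕ} (hm : 0 < m) (ha : a < m) (hb : b < m)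
    (h : (a + b) % m = m - 1) : a + b = m - 1 := by
  rcases lt_or_ge (a + b) m with hlt | hge
  · rw [Nat.mod_eq_of_lt hlt] at h
    exact h
  · rw [Nat.mod_eq_sub_mod hge, Nat.mod_eq_of_lt (by omega)] at h
    omega

lemma pred_mod {m s : ℕ} (hm : 2 ≤ m) (h : s % m = m - 1) :
    (s - 1) % m = m - 2 := by
  have hd := Nat.div_add_mod s m
  have h1 : s - 1 = (m - 2) + m * (s / m) := by omega
  rw [h1, Nat.add_mul_mod_self_left]
  exact Nat.mod_eq_of_lt (by omega)

/-! ### The main induction -/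

lemma main_aux (k : ℕ) : ∀ s x z : ℕ, x + z = s →
    (IsUlam (wordThree x (2^(k+1)-1) z) ↔
      (s % 2^(k+1) = 2^(k+1) - 1 ∧ s ≠ 2^(k+1) - 1)) := by
  intro s
  induction s using Nat.strong_induction_on with
  | _ s ih =>
    intro x z hxz
    have hm : 2 ≤ 2^(k+1) := by
      have h2 : (2:ℕ)^1 ≤ 2^(k+1) := Nat.pow_le_pow_right (by norm_num) (by omega)
      simpa using h2
    have hmlt : ∀ w : ℕ, w % 2^(k+1) < 2^(k+1) := fun w => Nat.mod_lt w (by omega)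
    have hQ3 : ∀ p : List Bool × List Bool,
        (p.1 ≠ [] ∧ p.2 ≠ [] ∧ p.1 ≠ p.2 ∧ wordThree x (2^(k+1)-1) z = p.1 ++ p.2 ∧
          IsUlam p.1 ∧ IsUlam p.2) ↔
        ((∃ a, a ≤ 2^(k+1)-1 ∧ Disj x a ∧ Disj (2^(k+1)-1 - a) z ∧
            ¬(x = 2^(k+1)-1 - a ∧ a = z) ∧
            p = (wordTwo x a, wordTwo (2^(k+1)-1 - a) z)) ∨
         (1 ≤ x ∧ IsUlam (wordThree (x-1) (2^(k+1)-1) z) ∧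
            p = (([false] : List Bool), wordThree (x-1) (2^(k+1)-1) z)) ∨
         (1 ≤ z ∧ IsUlam (wordThree x (2^(k+1)-1) (z-1)) ∧
            p = (wordThree x (2^(k+1)-1) (z-1), ([false] : List Bool)))) := by
      intro p
      constructor
      · rintro ⟨h1, h2, h3, h4, h5, h6⟩
        rcases wordThree_split x h1 h2 h4 with ⟨j, hj1, hjx, hju, hjv⟩ |
          ⟨a, hay, hju, hjv⟩ | ⟨j, hj1, hjz, hju, hjv⟩
        · have hj : j = 1 := isUlam_replicate j (by rw [← hju]; exact h5)
          subst hj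
          right; left
          refine ⟨hjx, by rw [← hjv]; exact h6, ?_⟩
          rw [Prod.ext_iff]
          exact ⟨by rw [hju]; rfl, hjv⟩
        · left
          refine ⟨a, hay, ?_, ?_, ?_, ?_⟩
          · rw [← isUlam_wordTwo (x + a) x a rfl, ← hju]
            exact h5
          · rw [← isUlam_wordTwo ((2^(k+1)-1 - a) + z) (2^(k+1)-1 - a) z rfl, ← hjv]
            exact h6
          · rintro ⟨e1, e2⟩
            apply h3
            rw [hju, hjv, e1, e2]
          · rw [Prod.ext_iff]
            exact ⟨hju, hjv⟩
        · have hj : j = 1 := isUlam_replicate j (by rw [← hjv]; exact h6)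
          subst hj
          right; right
          refine ⟨hjz, by rw [← hju]; exact h5, ?_⟩
          rw [Prod.ext_iff]
          exact ⟨hju, by rw [hjv]; rfl⟩
      · rintro (⟨a, hay, hD1, hD2, hne, rfl⟩ | ⟨hx1, hU, rfl⟩ | ⟨hz1, hU, rfl⟩)
        · refine ⟨wordTwo_ne_nil _ _, wordTwo_ne_nil _ _, ?_,
            wordThree_eq_middle x z hay,
            (isUlam_wordTwo (x + a) x a rfl).mpr hD1,
            (isUlam_wordTwo ((2^(k+1)-1 - a) + z) (2^(k+1)-1 - a) z rfl).mpr hD2⟩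
          intro hh
          obtain ⟨e1, e2⟩ := wordTwo_inj hh
          exact hne ⟨e1, e2⟩
        · exact ⟨by simp, wordThree_ne_nil _ _ _, false_ne_wordThree _ _ _,
            wordThree_eq_left _ _ hx1, isUlam_false, hU⟩
        · exact ⟨wordThree_ne_nil _ _ _, by simp,
            fun hh => false_ne_wordThree _ _ _ hh.symm,
            wordThree_eq_right _ _ hz1, hU, isUlam_false⟩
    rw [isUlam_iff_two (by rw [wordThree_length]; omega), existsUnique_congr hQ3]
    by_cases hr : s % 2^(k+1) = 2^(k+1) - 1
    · -- the residue is -1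
      have hs1 : 1 ≤ s := by
        have hmod := Nat.mod_le s (2^(k+1))
        omega
      have hsum : x % 2^(k+1) + z % 2^(k+1) = 2^(k+1) - 1 := by
        apply sum_mod_eq (by omega) (hmlt x) (hmlt z)
        rw [← Nat.add_mod, hxz]
        exact hr
      have hbound : (s - 1) % 2^(k+1) = 2^(k+1) - 2 := pred_mod hm hr
      have hBL : 1 ≤ x → ¬ IsUlam (wordThree (x-1) (2^(k+1)-1) z) := by
        intro hx1 hU
        have hih := (ih (s-1) (by omega) (x-1) z (by omega)).mp hU
        omega
      have hBR : 1 ≤ z → ¬ IsUlam (wordThree x (2^(k+1)-1) (z-1)) := by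
        intro hz1 hU
        have hih := (ih (s-1) (by omega) x (z-1) (by omega)).mp hU
        omega
      have hDm : Disj (x % 2^(k+1)) (z % 2^(k+1)) := by
        have hzmeq : z % 2^(k+1) = 2^(k+1) - 1 - x % 2^(k+1) := by
          have := hmlt x
          omega
        rw [hzmeq]
        exact disj_compl_right (hmlt x)
      by_cases hs : s = 2^(k+1) - 1
      · refine iff_of_false ?_ (fun hc => hc.2 hs)
        apply not_existsUnique_of_none
        rintro p (⟨a, hay, hD1, hD2, hne, rfl⟩ | ⟨hx1, hU, rfl⟩ | ⟨hz1, hU, rfl⟩)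
        · have haz : a = z % 2^(k+1) := key_unique hsum hay hD1 hD2
          have hzlt : z < 2^(k+1) := by omega
          have haz' : a = z := by rw [haz]; exact Nat.mod_eq_of_lt hzlt
          exact hne ⟨by omega, haz'⟩
        · exact hBL hx1 hU
        · exact hBR hz1 hU
      · refine iff_of_true ?_ ⟨hr, hs⟩
        refine ⟨(wordTwo x (z % 2^(k+1)), wordTwo (2^(k+1)-1 - z % 2^(k+1)) z),
          Or.inl ⟨z % 2^(k+1), by have := hmlt z; omega,
            disj_x_mod hDm, disj_compl_z hDm, ?_, rfl⟩, ?_⟩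
        · rintro ⟨e1, e2⟩
          have := hmlt z
          exact hs (by omega)
        · rintro q (⟨a, hay, hD1, hD2, hne, rfl⟩ | ⟨hx1, hU, rfl⟩ | ⟨hz1, hU, rfl⟩)
          · have haz : a = z % 2^(k+1) := key_unique hsum hay hD1 hD2
            rw [haz]
          · exact absurd hU (hBL hx1)
          · exact absurd hU (hBR hz1)
    · -- the residue is not -1 : never Ulam
      refine iff_of_false ?_ (fun hc => hr hc.1)
      have hne_s : ∀ a : ℕ, a ≤ 2^(k+1)-1 → ¬(x = 2^(k+1)-1 - a ∧ a = z) := by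
        rintro a ha ⟨e1, e2⟩
        apply hr
        have hseq : s = 2^(k+1)-1 := by omega
        rw [hseq]
        exact Nat.mod_eq_of_lt (by omega)
      by_cases hD : Disj (x % 2^(k+1)) (z % 2^(k+1))
      · -- two middle witnesses
        apply not_existsUnique_of_two
          (a := (wordTwo x (z % 2^(k+1)),
                 wordTwo (2^(k+1)-1 - z % 2^(k+1)) z))
          (b := (wordTwo x (2^(k+1)-1 - x % 2^(k+1)),
                 wordTwo (2^(k+1)-1 - (2^(k+1)-1 - x % 2^(k+1))) z))
        · exact Or.inl ⟨z % 2^(k+1), by have := hmlt z; omega,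
            disj_x_mod hD, disj_compl_z hD,
            hne_s _ (by have := hmlt z; omega), rfl⟩
        · have hcompl : 2^(k+1)-1 - (2^(k+1)-1 - x % 2^(k+1)) = x % 2^(k+1) := by
            have := hmlt x
            omega
          refine Or.inl ⟨2^(k+1)-1 - x % 2^(k+1), by omega,
            disj_x_compl (k+1) x, ?_, hne_s _ (by omega), rfl⟩
          rw [hcompl]
          exact disj_mod_z hD
        · intro hq
          have he := (wordTwo_inj (congrArg Prod.fst hq)).2
          apply hr
          have hxm := hmlt x
          have hzm := hmlt z
          have hsum : x % 2^(k+1) + z % 2^(k+1) = 2^(k+1)-1 := by omega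
          have hrs : s % 2^(k+1) = (x % 2^(k+1) + z % 2^(k+1)) % 2^(k+1) := by
            rw [← hxz, Nat.add_mod]
          rw [hrs, hsum]
          exact Nat.mod_eq_of_lt (by omega)
      · -- shared low bit
        have hD' : ∃ i, (x % 2^(k+1)).testBit i = true ∧
            (z % 2^(k+1)).testBit i = true := by
          by_contra hc
          push_neg at hc
          exact hD (fun i hh => hc i hh.1 hh.2)
        obtain ⟨i, hxi, hzi⟩ := hD'
        have hx1 : 1 ≤ x := by
          rcases Nat.eq_zero_or_pos x with h0 | h0
          · rw [h0] at hxi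
            simp [Nat.zero_mod, Nat.zero_testBit] at hxi
          · exact h0
        have hz1 : 1 ≤ z := by
          rcases Nat.eq_zero_or_pos z with h0 | h0
          · rw [h0] at hzi
            simp [Nat.zero_mod, Nat.zero_testBit] at hzi
          · exact h0
        by_cases hb : (s - 1) % 2^(k+1) = 2^(k+1) - 1 ∧ s - 1 ≠ 2^(k+1) - 1
        · apply not_existsUnique_of_two
            (a := ((([false] : List Bool)), wordThree (x-1) (2^(k+1)-1) z))
            (b := (wordThree x (2^(k+1)-1) (z-1), (([false] : List Bool))))
          · exact Or.inr (Or.inl ⟨hx1,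
              (ih (s-1) (by omega) (x-1) z (by omega)).mpr hb, rfl⟩)
          · exact Or.inr (Or.inr ⟨hz1,
              (ih (s-1) (by omega) x (z-1) (by omega)).mpr hb, rfl⟩)
          · intro hq
            exact false_ne_wordThree _ _ _ (congrArg Prod.fst hq)
        · apply not_existsUnique_of_none
          rintro p (⟨a, hay, hD1, hD2, hne, rfl⟩ | ⟨hx1', hU, rfl⟩ | ⟨hz1', hU, rfl⟩)
          · exact key_kill hxi hzi hay hD1 hD2
          · exact hb ((ih (s-1) (by omega) (x-1) z (by omega)).mp hU)
          · exact hb ((ih (s-1) (by omega) x (z-1) (by omega)).mp hU)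

end UlamDev

/-- `Ulam[2^(k+1)-1]` is exactly the set of `(x,z)` with
`x+z ≡ -1 (mod 2^(k+1))` and `x+z ≠ 2^(k+1)-1`. -/
theorem ulamSet_pow_sub_one (k : ℕ) :
    UlamSet (2 ^ (k + 1) - 1) =
      {p : ℕ × ℕ | (p.1 + p.2) % 2 ^ (k + 1) = 2 ^ (k + 1) - 1 ∧
        p.1 + p.2 ≠ 2 ^ (k + 1) - 1} := by
  ext ⟨x, z⟩
  simp only [UlamSet, Set.mem_setOf_eq]
  exact main_aux k (x + z) x z rfl
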